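/- Assume P is transitive and asymmetric and satisfies the Strong Super-Supplementation Principle SSP+: ∀ x y, ¬ Ing x y → ∃ z, Ing z x ∧ Ext z y ∧ ∀ u, (Ing u x ∧ Ext u y) → Ing u z. Then mereological sums and suprema coincide on non-empty sets: for every non-empty S : Set U and every x ∈ U, Sum x S if and only if Sup x S. -/

import Mathlib

variable {U : Type*}

/-- `x` is an ingrediens of `y`. -/
def Ing (P : U → U → Prop) (x y : U) : Prop := x = y ∨ P x y

/-- `x` and `y` overlap. -/
def Ov (P : U → U → Prop) (x y : U) : Prop := ∃ z, Ing P z x ∧ Ing P z y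

/-- `x` is exterior to `y`. -/
def MExt (P : U → U → Prop) (x y : U) : Prop := ¬ Ov P x y

/-- `x` is a mereological sum of all elements of `S`. -/
def MSum (P : U → U → Prop) (x : U) (S : Set U) : Prop :=
  (∀ s ∈ S, Ing P s x) ∧ ∀ u, Ing P u x → ∃ s ∈ S, Ov P s u

/-- `x` is a supremum (least upper bound) of `S`. -/
def MSup (P : U → U → Prop) (x : U) (S : Set U) : Prop :=
  (∀ s ∈ S, Ing P s x) ∧ ∀ u, (∀ s ∈ S, Ing P s u) → Ing P x u

/-- `x` and `y` cross (properly overlap). -/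
def POv (P : U → U → Prop) (x y : U) : Prop :=
  x ≠ y ∧ ¬ P x y ∧ ¬ P y x ∧ ∃ z, P z x ∧ P z y

/-
Sum ⇒ supremum: if a sum `x` of `S` were not below an upper bound `u`, supplementation would give
a part `z` of `x` exterior to `u`; but `z` overlaps some `s ∈ S ⊆ u`.
Supremum ⇒ sum: if some part `u` of a supremum `x` overlapped no member of `S`, then `x` is not
below `u` (as `S` is non-empty), so SSP+ gives the largest part `z` of `x` exterior to `u`. Every
`s ∈ S` lies below `z`, hence so does `x`, and then `u ≤ x ≤ z` contradicts `z` being exterior to `u`.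
-/

section Mereology

variable {P : U → U → Prop}

theorem ing_refl (x : U) : Ing P x x := Or.inl rfl

theorem Ing.trans (htrans : ∀ x y z, P x y → P y z → P x z) {x y z : U}
    (hxy : Ing P x y) (hyz : Ing P y z) : Ing P x z := by
  rcases hxy with rfl | hxy
  · exact hyz
  rcases hyz with rfl | hyz
  · exact Or.inr hxy
  · exact Or.inr (htrans _ _ _ hxy hyz)

theorem ov_of_ing {x y : U} (h : Ing P x y) : Ov P x y := ⟨x, ing_refl x, h⟩

theorem MSum.msup (htrans : ∀ x y z, P x y → P y z → P x z)
    (hSSP : ∀ x y, ¬ Ing P x y → ∃ z, Ing P z x ∧ MExt P z y)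
    {x : U} {S : Set U} (hx : MSum P x S) : MSup P x S := by
  refine ⟨hx.1, fun u hu => ?_⟩
  by_contra hxu
  obtain ⟨z, hzx, hzu⟩ := hSSP x u hxu
  obtain ⟨s, hs, w, hws, hwz⟩ := hx.2 z hzx
  exact hzu ⟨w, hwz, hws.trans htrans (hu s hs)⟩

theorem MSup.msum (htrans : ∀ x y z, P x y → P y z → P x z)
    (hSSPplus : ∀ x y, ¬ Ing P x y →
      ∃ z, Ing P z x ∧ MExt P z y ∧ ∀ u, (Ing P u x ∧ MExt P u y) → Ing P u z)
    {x : U} {S : Set U} (hS : S.Nonempty) (hx : MSup P x S) : MSum P x S := by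
  refine ⟨hx.1, fun u hux => ?_⟩
  by_contra! hSu
  have hxu : ¬ Ing P x u := by
    obtain ⟨s, hs⟩ := hS
    exact fun hxu => hSu s hs (ov_of_ing ((hx.1 s hs).trans htrans hxu))
  obtain ⟨z, -, hzu, hz_max⟩ := hSSPplus x u hxu
  have hxz : Ing P x z := hx.2 z fun s hs => hz_max s ⟨hx.1 s hs, hSu s hs⟩
  exact hzu ⟨u, hux.trans htrans hxz, ing_refl u⟩

end Mereology

theorem stmt_19_general (P : U → U → Prop)
    (htrans : ∀ x y z, P x y → P y z → P x z)
    (hSSPplus : ∀ x y, ¬ Ing P x y →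
      ∃ z, Ing P z x ∧ MExt P z y ∧ ∀ u, (Ing P u x ∧ MExt P u y) → Ing P u z) :
    ∀ (S : Set U) (x : U), S.Nonempty → (MSum P x S ↔ MSup P x S) := fun _ _ hS =>
  ⟨MSum.msup htrans (fun x y h => (hSSPplus x y h).imp fun _ hz => ⟨hz.1, hz.2.1⟩),
    MSup.msum htrans hSSPplus hS⟩

theorem stmt_19 (P : U → U → Prop)
    (htrans : ∀ x y z, P x y → P y z → P x z)
    (hasym : ∀ x y, ¬ (P x y ∧ P y x))
    (hSSPplus : ∀ x y, ¬ Ing P x y →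
      ∃ z, Ing P z x ∧ MExt P z y ∧ ∀ u, (Ing P u x ∧ MExt P u y) → Ing P u z) :
    ∀ (S : Set U) (x : U), S.Nonempty → (MSum P x S ↔ MSup P x S) :=
  stmt_19_general P htrans hSSPplus
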